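/- Let Γ be a linear order, n ≥ 2 an integer, G = Lex(Γ →₀ ℤ), and let g ∈ G be an element that is not of the form n • x. Let i₀ be the least element of the (nonempty, finite) set {j ∈ Γ | g j is not divisible by n}. Then the convex subgroup F = {h ∈ G | support h ⊆ {j ∈ Γ | i₀ < j}} is disjoint from the coset g + nG, and every convex subgroup of G disjoint from g + nG is contained in F; i.e., F is the largest convex subgroup F_n(g) of G whose intersection with g + nG is empty. -/

import Mathlib

/-!
Write `F` for the set of `h` vanishing at every index `≤ i₀`. It is convex: an element with a
nonzero coordinate at some `j ≤ i₀` is, in absolute value, larger than every element of `F`.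
It misses the coset `g + nG` because every element of the coset has `i₀`-coordinate
`≡ g i₀ ≢ 0 (mod n)`. Conversely, suppose a convex subgroup `H` contains an `x` whose first
nonzero coordinate sits at some `j ≤ i₀`. Reducing `g` coordinatewise modulo `n` gives an
element `r ≥ 0` of the coset that vanishes below `j` (there `n ∣ g` by minimality of `i₀`) and
satisfies `r j < n ≤ |(n • x) j|`, so `r < |n • x|` and convexity puts `r` into `H`.
-/

/-- A convex subgroup of `G = Lex (Γ →₀ ℤ)`, as a subset: it contains `0`, is closed under
addition and negation, and whenever `g ∈ H` and `|h| ≤ |g|` then `h ∈ H`. -/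
def IsConvexSubgroup {Γ : Type*} [LinearOrder Γ] (H : Set (Lex (Γ →₀ ℤ))) : Prop :=
  (0 : Lex (Γ →₀ ℤ)) ∈ H ∧ (∀ a ∈ H, ∀ b ∈ H, a + b ∈ H) ∧ (∀ a ∈ H, -a ∈ H) ∧
    ∀ g ∈ H, ∀ h : Lex (Γ →₀ ℤ), |h| ≤ |g| → h ∈ H

namespace Finsupp

variable {Γ M : Type*}

@[simp]
theorem ofLex_nsmul_apply [AddMonoid M] (n : ℕ) (x : Lex (Γ →₀ M)) (i : Γ) :
    ofLex (n • x) i = n • ofLex x i :=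
  rfl

variable [LinearOrder Γ]

theorem coe_support_subset_Ioi_iff [Zero M] (f : Γ →₀ M) (i₀ : Γ) :
    ↑f.support ⊆ {j | i₀ < j} ↔ ∀ i ≤ i₀, f i = 0 := by
  simp only [Set.subset_def, Finset.mem_coe, mem_support_iff, Set.mem_ofPred_eq]
  exact forall_congr' fun i => not_imp_comm.trans (by rw [not_lt])

theorem exists_le_apply_ne_zero_forall_lt_eq_zero [Zero M] (f : Γ →₀ M) {i : Γ}
    (hi : f i ≠ 0) : ∃ j ≤ i, f j ≠ 0 ∧ ∀ d < j, f d = 0 := by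
  have hne : f.support.Nonempty := ⟨i, mem_support_iff.2 hi⟩
  refine ⟨f.support.min' hne, f.support.min'_le i (mem_support_iff.2 hi),
    mem_support_iff.1 (f.support.min'_mem hne), fun d hd => ?_⟩
  by_contra hfd
  exact (f.support.min'_le d (mem_support_iff.2 hfd)).not_gt hd

theorem ofLex_abs_apply_eq_zero_iff [AddCommGroup M] [LinearOrder M] (x : Lex (Γ →₀ M))
    (i : Γ) : ofLex |x| i = 0 ↔ ofLex x i = 0 := by
  rcases abs_choice x with h | h <;> simp [h]

theorem ofLex_abs_apply_of_forall_lt_eq_zero [AddCommGroup M] [LinearOrder M]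
    [IsOrderedAddMonoid M] {x : Lex (Γ →₀ M)} {j : Γ} (hx : ∀ d < j, ofLex x d = 0) :
    ofLex |x| j = |ofLex x j| := by
  rcases lt_trichotomy (ofLex x j) 0 with hneg | hzero | hpos
  · have : x < 0 := Lex.lt_iff.2 ⟨j, fun d hd => by simp [hx d hd], by simpa using hneg⟩
    simp [abs_of_neg this, abs_of_neg hneg]
  · simp [(ofLex_abs_apply_eq_zero_iff x j).2 hzero, hzero]
  · have : 0 < x := Lex.lt_iff.2 ⟨j, fun d hd => by simp [hx d hd], by simpa using hpos⟩
    simp [abs_of_pos this, abs_of_pos hpos]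

end Finsupp

open Finsupp

section

variable {Γ : Type*}

theorem ofLex_add_nsmul_apply_ne_zero {g : Lex (Γ →₀ ℤ)} {n : ℕ} {i : Γ}
    (hi : ¬ (n : ℤ) ∣ ofLex g i) (y : Lex (Γ →₀ ℤ)) : ofLex (g + n • y) i ≠ 0 := by
  intro h
  refine hi ⟨-ofLex y i, ?_⟩
  have : ofLex g i + n * ofLex y i = 0 := by simpa using h
  linarith

theorem exists_add_nsmul_eq_emod (g : Lex (Γ →₀ ℤ)) (n : ℕ) :
    ∃ r : Lex (Γ →₀ ℤ), (∃ y, r = g + n • y) ∧ ∀ i, ofLex r i = ofLex g i % n := by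
  refine ⟨toLex ((ofLex g).mapRange (· % (n : ℤ)) (Int.zero_emod _)),
    ⟨toLex ((ofLex g).mapRange (fun a => -(a / (n : ℤ))) (by simp)), ?_⟩, fun i => by simp⟩
  refine ofLex.injective (Finsupp.ext fun i => ?_)
  simp [Int.emod_def]
  ring

variable [LinearOrder Γ]

theorem IsConvexSubgroup.nsmul_mem {H : Set (Lex (Γ →₀ ℤ))} (hH : IsConvexSubgroup H)
    {x : Lex (Γ →₀ ℤ)} (hx : x ∈ H) (m : ℕ) : m • x ∈ H := by
  induction m with
  | zero => simpa using hH.1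
  | succ k ih => simpa [succ_nsmul] using hH.2.1 _ ih _ hx

theorem isConvexSubgroup_setOf_forall_le_eq_zero (i₀ : Γ) :
    IsConvexSubgroup {h : Lex (Γ →₀ ℤ) | ∀ i ≤ i₀, ofLex h i = 0} := by
  refine ⟨fun _ _ => rfl, fun a ha b hb i hi => ?_, fun a ha i hi => ?_, ?_⟩
  · simp [ha i hi, hb i hi]
  · simp [ha i hi]
  intro a ha h hle i hi
  by_contra hhi
  obtain ⟨j, hji, hhj, hbelow⟩ := exists_le_apply_ne_zero_forall_lt_eq_zero (ofLex h) hhi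
  refine hle.not_gt (Lex.lt_iff.2 ⟨j, fun d hd => ?_, ?_⟩)
  · change ofLex |a| d = ofLex |h| d
    rw [(ofLex_abs_apply_eq_zero_iff a d).2 (ha d (hd.le.trans (hji.trans hi))),
      (ofLex_abs_apply_eq_zero_iff h d).2 (hbelow d hd)]
  · change ofLex |a| j < ofLex |h| j
    rw [(ofLex_abs_apply_eq_zero_iff a j).2 (ha j (hji.trans hi)),
      ofLex_abs_apply_of_forall_lt_eq_zero hbelow]
    exact abs_pos.2 hhj

theorem lt_nsmul_abs {r x : Lex (Γ →₀ ℤ)} {n : ℕ} {j : Γ} (hr : ∀ d < j, ofLex r d = 0)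
    (hrj : ofLex r j < n) (hx : ∀ d < j, ofLex x d = 0) (hxj : ofLex x j ≠ 0) :
    r < n • |x| := by
  refine Lex.lt_iff.2 ⟨j, fun d hd => ?_, ?_⟩
  · change ofLex r d = ofLex (n • |x|) d
    simp [hr d hd, (ofLex_abs_apply_eq_zero_iff x d).2 (hx d hd)]
  · change ofLex r j < ofLex (n • |x|) j
    rw [ofLex_nsmul_apply, ofLex_abs_apply_of_forall_lt_eq_zero hx, nsmul_eq_mul]
    calc ofLex r j < n := hrj
      _ ≤ n * |ofLex x j| := le_mul_of_one_le_right (by positivity) (Int.one_le_abs hxj)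

theorem subset_setOf_forall_le_eq_zero_of_disjoint {n : ℕ} (hn : 0 < n) {g : Lex (Γ →₀ ℤ)}
    {i₀ : Γ} (hleast : ∀ j : Γ, ¬ (n : ℤ) ∣ ofLex g j → i₀ ≤ j) {H : Set (Lex (Γ →₀ ℤ))}
    (hH : IsConvexSubgroup H) (hdisj : ∀ x ∈ H, ¬ ∃ y : Lex (Γ →₀ ℤ), x = g + n • y) :
    H ⊆ {h | ∀ i ≤ i₀, ofLex h i = 0} := by
  intro x hx i hi
  by_contra hxi
  obtain ⟨j, hji, hxj, hbelow⟩ := exists_le_apply_ne_zero_forall_lt_eq_zero (ofLex x) hxi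
  obtain ⟨r, hr_coset, hr⟩ := exists_add_nsmul_eq_emod g n
  have hn' : (0 : ℤ) < n := by exact_mod_cast hn
  have hr_nonneg : 0 ≤ r := by
    have : (0 : Γ →₀ ℤ) ≤ ofLex r := fun i => by simpa [hr i] using Int.emod_nonneg _ hn'.ne'
    simpa using toLex_monotone this
  have hr_below : ∀ d < j, ofLex r d = 0 := fun d hd => by
    rw [hr d]
    refine Int.emod_eq_zero_of_dvd (not_not.1 fun hnd => ?_)
    exact (hleast d hnd).not_gt (hd.trans_le (hji.trans hi))
  have hr_lt : r < n • |x| := lt_nsmul_abs hr_below (hr j ▸ Int.emod_lt_of_pos _ hn') hbelow hxj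
  refine hdisj r (hH.2.2.2 _ (hH.nsmul_mem hx n) r ?_) hr_coset
  rw [abs_nsmul, abs_of_nonneg hr_nonneg]
  exact hr_lt.le

end

theorem stmt_3_general {Γ : Type*} [LinearOrder Γ] (n : ℕ) (hn : 2 ≤ n) (g : Lex (Γ →₀ ℤ))
    (i₀ : Γ)
    (hi₀ : ¬ (n : ℤ) ∣ ofLex g i₀)
    (hleast : ∀ j : Γ, ¬ (n : ℤ) ∣ ofLex g j → i₀ ≤ j) :
    IsConvexSubgroup {h : Lex (Γ →₀ ℤ) | ↑(ofLex h).support ⊆ {j : Γ | i₀ < j}} ∧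
    (∀ x ∈ {h : Lex (Γ →₀ ℤ) | ↑(ofLex h).support ⊆ {j : Γ | i₀ < j}},
      ¬ ∃ y : Lex (Γ →₀ ℤ), x = g + n • y) ∧
    ∀ H : Set (Lex (Γ →₀ ℤ)), IsConvexSubgroup H →
      (∀ x ∈ H, ¬ ∃ y : Lex (Γ →₀ ℤ), x = g + n • y) →
      H ⊆ {h : Lex (Γ →₀ ℤ) | ↑(ofLex h).support ⊆ {j : Γ | i₀ < j}} := by
  have hF : {h : Lex (Γ →₀ ℤ) | ↑(ofLex h).support ⊆ {j : Γ | i₀ < j}} =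
      {h : Lex (Γ →₀ ℤ) | ∀ i ≤ i₀, ofLex h i = 0} :=
    Set.ext fun h => coe_support_subset_Ioi_iff (ofLex h) i₀
  rw [hF]
  refine ⟨isConvexSubgroup_setOf_forall_le_eq_zero i₀, ?_,
    fun H hH hdisj => subset_setOf_forall_le_eq_zero_of_disjoint (by omega) hleast hH hdisj⟩
  rintro x hx ⟨y, rfl⟩
  exact ofLex_add_nsmul_apply_ne_zero hi₀ y (hx i₀ le_rfl)

/-- Let `n ≥ 2`, `G = Lex (Γ →₀ ℤ)`, and `g ∈ G` not of the form `n • x`. Let `i₀` be the least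
element of `{j | n ∤ g j}`. Then the convex subgroup `F = {h | support h ⊆ {j | i₀ < j}}` is
disjoint from the coset `g + nG`, and every convex subgroup of `G` disjoint from `g + nG` is
contained in `F`; i.e. `F` is the largest convex subgroup `F_n(g)` of `G` whose intersection
with `g + nG` is empty. -/
theorem stmt_3 {Γ : Type*} [LinearOrder Γ] (n : ℕ) (hn : 2 ≤ n) (g : Lex (Γ →₀ ℤ))
    (hg : ¬ ∃ x : Lex (Γ →₀ ℤ), g = n • x) (i₀ : Γ)
    (hi₀ : ¬ (n : ℤ) ∣ ofLex g i₀)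
    (hleast : ∀ j : Γ, ¬ (n : ℤ) ∣ ofLex g j → i₀ ≤ j) :
    IsConvexSubgroup {h : Lex (Γ →₀ ℤ) | ↑(ofLex h).support ⊆ {j : Γ | i₀ < j}} ∧
    (∀ x ∈ {h : Lex (Γ →₀ ℤ) | ↑(ofLex h).support ⊆ {j : Γ | i₀ < j}},
      ¬ ∃ y : Lex (Γ →₀ ℤ), x = g + n • y) ∧
    ∀ H : Set (Lex (Γ →₀ ℤ)), IsConvexSubgroup H →
      (∀ x ∈ H, ¬ ∃ y : Lex (Γ →₀ ℤ), x = g + n • y) →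
      H ⊆ {h : Lex (Γ →₀ ℤ) | ↑(ofLex h).support ⊆ {j : Γ | i₀ < j}} :=
  stmt_3_general n hn g i₀ hi₀ hleast
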